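/- arXiv:1302.0146 — 3 statements merged into one kernel-verified Lean document; each statement's English description precedes it below -/
import Mathlib

section
/- Let (X,d,μ) be a metric measure space with μ a Borel measure, let m > n > 2 be real numbers, let X = E₁ ∪ E₂ ∪ K with E₁, E₂, K pairwise disjoint measurable sets, and let h : X → [1,∞) be measurable. Assume there is a constant C₀ ≥ 1 such that: (i) μ(K) ≤ C₀; (ii) C₀⁻¹ r^m ≤ μ(B(x,r)) ≤ C₀ r^m for every x ∈ X and every 0 < r ≤ 1; (iii) the uncentered Hardy–Littlewood maximal operators of the metric measure subspaces (E₁ ∪ K, d, μ) and (E₂ ∪ K, d, μ) are of weak type (1,1); (iv) μ(B) ≥ C₀⁻¹ h(x)ⁿ for every open ball B of X containing a point x ∈ E₂ with B ∩ E₁ ≠ ∅; μ(B) ≥ C₀⁻¹ h(x)ⁿ for every open ball B containing a point x ∈ E₂ with h(x) > 2 and B ∩ K ≠ ∅; and μ(B) ≥ C₀⁻¹ h(x)^m for every open ball B containing a point x ∈ E₁ with B ∩ (E₂ ∪ K) ≠ ∅; (v) μ({x ∈ E₂ : h(x) ≤ R}) ≤ C₀ Rⁿ and μ({x ∈ E₁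 : h(x) ≤ R}) ≤ C₀ R^m for every R ≥ 1. Then there exists a constant C, depending only on m, n, C₀ and the weak type (1,1) constants in (iii), such that the uncentered Hardy–Littlewood maximal operator M of (X,d,μ) satisfies μ({x ∈ X : Mf(x) > α}) ≤ C‖f‖_{L¹(μ)}/α for all f ∈ L¹(μ) and α > 0, and for every 1 < p ≤ ∞ there is C_p with ‖Mf‖_{L^p(μ)} ≤ C_p‖f‖_{L^p(μ)} for all f ∈ L^p(μ). -/
open MeasureTheory Metric ENNReal NNReal Filter

/-- The uncentered Hardy–Littlewood maximal function of `f` with respect to the measure `μ`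
on a metric space: the supremum of the averages of `|f|` over all open balls containing `x`
with finite positive measure. -/
noncomputable def uncenteredMaximal {X : Type*} [MetricSpace X] [MeasurableSpace X]
    (μ : Measure X) (f : X → ℝ) (x : X) : ℝ≥0∞ :=
  ⨆ (c : X) (r : ℝ) (_ : x ∈ ball c r) (_ : 0 < μ (ball c r)) (_ : μ (ball c r) < ∞),
    (μ (ball c r))⁻¹ * ∫⁻ y in ball c r, ‖f y‖₊ ∂μ

/-- The uncentered Hardy–Littlewood maximal function of the metric measure subspace
`(S, d, μ|_S)`: balls of the subspace are the sets `S ∩ ball c r` with `c ∈ S`. -/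
noncomputable def uncenteredMaximalOn {X : Type*} [MetricSpace X] [MeasurableSpace X]
    (μ : Measure X) (S : Set X) (f : X → ℝ) (x : X) : ℝ≥0∞ :=
  ⨆ (c : X) (_ : c ∈ S) (r : ℝ) (_ : x ∈ S ∩ ball c r)
    (_ : 0 < μ (S ∩ ball c r)) (_ : μ (S ∩ ball c r) < ∞),
    (μ (S ∩ ball c r))⁻¹ * ∫⁻ y in S ∩ ball c r, ‖f y‖₊ ∂μ

/-- The `L^p` "norm" of an `ℝ≥0∞`-valued function (ess sup for `p = ∞`). -/
noncomputable def eLpNormENNReal {X : Type*} [MeasurableSpace X] (g : X → ℝ≥0∞)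
    (p : ℝ≥0∞) (μ : Measure X) : ℝ≥0∞ :=
  if p = ∞ then essSup g μ else (∫⁻ x, g x ^ p.toReal ∂μ) ^ (1 / p.toReal)

/-!
A ball `B ∋ x` on which `|f|` has average `> α` satisfies `μ B < ‖f‖₁ / α`. If `B` misses `E₂`
or misses `E₁`, it is a ball of the subspace `E₁ ∪ K` or `E₂ ∪ K`, and `x` lies in a level set
controlled by (iii). Otherwise `B` joins the two ends, and (iv) bounds `μ B` from below by
`C₀⁻¹ h(x)^m`, `C₀⁻¹ h(x)^n` or `C₀⁻¹` according as `x ∈ E₁`, `E₂` or `K`; by (v) and (i) the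
points where this lower bound is below `‖f‖₁ / α` form sets of measure `O(‖f‖₁ / α)`.
This gives the weak type (1,1) bound. As `M` is also bounded on `L^∞`, the `L^p` bound follows
as in Marcinkiewicz interpolation: split `f` at height `t / 2`, apply the weak bound to the upper
part, and integrate over `t` with the layer-cake formula.
-/

open Set Topology

section UncenteredMaximal

variable {X : Type*} [MetricSpace X] [MeasurableSpace X] {μ : Measure X} {f g : X → ℝ}

theorem le_uncenteredMaximal {c x : X} {r : ℝ} (hx : x ∈ ball c r)
    (h0 : 0 < μ (ball c r)) (htop : μ (ball c r) < ∞) :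
    (μ (ball c r))⁻¹ * ∫⁻ y in ball c r, ‖f y‖₊ ∂μ ≤ uncenteredMaximal μ f x :=
  le_iSup_of_le c <| le_iSup_of_le r <| le_iSup_of_le hx <| le_iSup_of_le h0 <|
    le_iSup_of_le htop le_rfl

theorem lt_uncenteredMaximal_iff {x : X} {a : ℝ≥0∞} :
    a < uncenteredMaximal μ f x ↔ ∃ c r, x ∈ ball c r ∧ 0 < μ (ball c r) ∧ μ (ball c r) < ∞ ∧
      a < (μ (ball c r))⁻¹ * ∫⁻ y in ball c r, ‖f y‖₊ ∂μ := by
  simp only [uncenteredMaximal, lt_iSup_iff, exists_prop]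

theorem uncenteredMaximal_congr_ae (hfg : f =ᵐ[μ] g) :
    uncenteredMaximal μ f = uncenteredMaximal μ g := by
  have hint (s : Set X) : ∫⁻ y in s, ‖f y‖₊ ∂μ = ∫⁻ y in s, ‖g y‖₊ ∂μ :=
    lintegral_congr_ae <| ae_restrict_of_ae <| hfg.mono fun y hy => by simp only [hy]
  funext x
  simp only [uncenteredMaximal, hint]

theorem uncenteredMaximal_le {x : X} {b : ℝ≥0∞}
    (hb : ∀ c r, x ∈ ball c r → 0 < μ (ball c r) → μ (ball c r) < ∞ →
      (μ (ball c r))⁻¹ * ∫⁻ y in ball c r, ‖f y‖₊ ∂μ ≤ b) :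
    uncenteredMaximal μ f x ≤ b :=
  iSup_le fun c => iSup_le fun r => iSup_le fun hx => iSup_le fun h0 => iSup_le (hb c r hx h0)

theorem uncenteredMaximal_le_add {x : X} {a : ℝ≥0∞}
    (hfg : ∀ y, (‖f y‖₊ : ℝ≥0∞) ≤ ‖g y‖₊ + a) :
    uncenteredMaximal μ f x ≤ uncenteredMaximal μ g x + a := by
  refine uncenteredMaximal_le fun c r hx h0 htop => ?_
  calc (μ (ball c r))⁻¹ * ∫⁻ y in ball c r, ‖f y‖₊ ∂μ
      ≤ (μ (ball c r))⁻¹ * ∫⁻ y in ball c r, ((‖g y‖₊ : ℝ≥0∞) + a) ∂μ := by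
        gcongr with y; exact hfg y
    _ = (μ (ball c r))⁻¹ * ∫⁻ y in ball c r, ‖g y‖₊ ∂μ + a := by
        rw [lintegral_add_right _ measurable_const, setLIntegral_const, mul_add, mul_comm a,
          ← mul_assoc, ENNReal.inv_mul_cancel h0.ne' htop.ne, one_mul]
    _ ≤ uncenteredMaximal μ g x + a := by gcongr; exact le_uncenteredMaximal hx h0 htop

theorem uncenteredMaximal_le_eLpNorm_top (x : X) : uncenteredMaximal μ f x ≤ eLpNorm f ∞ μ := by
  refine uncenteredMaximal_le fun c r _ h0 htop => ?_
  rw [ENNReal.inv_mul_le_iff h0.ne' htop.ne, mul_comm, ← setLIntegral_const, eLpNorm_exponent_top]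
  exact lintegral_mono_ae (ae_restrict_of_ae ae_le_eLpNormEssSup)

theorem isOpen_setOf_lt_uncenteredMaximal (a : ℝ≥0∞) :
    IsOpen {x | a < uncenteredMaximal μ f x} := by
  refine isOpen_iff_mem_nhds.mpr fun x hx => ?_
  obtain ⟨c, r, hxc, h0, htop, hlt⟩ := lt_uncenteredMaximal_iff.mp hx
  exact mem_of_superset (isOpen_ball.mem_nhds hxc) fun y hy =>
    hlt.trans_le (le_uncenteredMaximal hy h0 htop)

theorem measurable_uncenteredMaximal [BorelSpace X] : Measurable (uncenteredMaximal μ f) :=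
  measurable_of_Ioi fun a => (isOpen_setOf_lt_uncenteredMaximal a).measurableSet

theorem lt_uncenteredMaximalOn_of_ball_subset {S : Set X} {c x : X} {r : ℝ} {a : ℝ≥0∞}
    (hsub : ball c r ⊆ S) (hx : x ∈ ball c r) (h0 : 0 < μ (ball c r))
    (htop : μ (ball c r) < ∞) (hlt : a < (μ (ball c r))⁻¹ * ∫⁻ y in ball c r, ‖f y‖₊ ∂μ) :
    a < uncenteredMaximalOn μ S f x := by
  have hSB : S ∩ ball c r = ball c r := inter_eq_self_of_subset_right hsub
  have hc : c ∈ S := hsub (mem_ball_self (dist_nonneg.trans_lt hx))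
  refine hlt.trans_le ?_
  rw [← hSB] at h0 htop ⊢
  exact le_iSup_of_le c <| le_iSup_of_le hc <| le_iSup_of_le r <|
    le_iSup_of_le ⟨hsub hx, hx⟩ <| le_iSup_of_le h0 <| le_iSup_of_le htop le_rfl

end UncenteredMaximal

theorem measure_setOf_ofReal_rpow_lt_le {X : Type*} [MeasurableSpace X] {μ : Measure X}
    {E : Set X} {h : X → ℝ} {q C₀ : ℝ} (hq : 0 < q) (hC₀ : 0 < C₀) (hh1 : ∀ x, 1 ≤ h x)
    (hdist : ∀ R : ℝ, 1 ≤ R → μ {x ∈ E | h x ≤ R} ≤ ENNReal.ofReal (C₀ * R ^ q)) (s : ℝ≥0∞) :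
    μ {x ∈ E | ENNReal.ofReal (C₀⁻¹ * h x ^ q) < s} ≤ ENNReal.ofReal (C₀ ^ 2) * s := by
  rcases eq_top_or_lt_top s with rfl | hs
  · simp [ENNReal.mul_top, hC₀.ne']
  set t := C₀ * s.toReal
  have hlt : ∀ x ∈ {x ∈ E | ENNReal.ofReal (C₀⁻¹ * h x ^ q) < s}, h x ^ q < t := fun x hx => by
    have hpos : 0 ≤ C₀⁻¹ * h x ^ q := by have := hh1 x; positivity
    rw [← inv_mul_lt_iff₀ hC₀, ← ENNReal.ofReal_lt_iff_lt_toReal hpos hs.ne]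
    exact hx.2
  rcases eq_empty_or_nonempty {x ∈ E | ENNReal.ofReal (C₀⁻¹ * h x ^ q) < s} with he | ⟨x₀, hx₀⟩
  · simp [he]
  have ht : 1 < t := (Real.one_le_rpow (hh1 x₀) hq.le).trans_lt (hlt x₀ hx₀)
  have hsub : {x ∈ E | ENNReal.ofReal (C₀⁻¹ * h x ^ q) < s} ⊆ {x ∈ E | h x ≤ t ^ q⁻¹} :=
    fun x hx => ⟨hx.1, ((Real.lt_rpow_inv_iff_of_pos (by linarith [hh1 x]) (by linarith) hq).mpr
      (hlt x hx)).le⟩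
  calc _ ≤ μ {x ∈ E | h x ≤ t ^ q⁻¹} := measure_mono hsub
    _ ≤ ENNReal.ofReal (C₀ * (t ^ q⁻¹) ^ q) :=
        hdist _ (Real.one_le_rpow ht.le (inv_nonneg.mpr hq.le))
    _ = ENNReal.ofReal (C₀ ^ 2) * s := by
        rw [← Real.rpow_mul (by linarith), inv_mul_cancel₀ hq.ne', Real.rpow_one,
          ← mul_assoc, ← sq, ENNReal.ofReal_mul (by positivity), ENNReal.ofReal_toReal hs.ne]

section WeakType

variable {X : Type*} [MetricSpace X] [MeasurableSpace X] {μ : Measure X}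

def MaximalWeakTypeOneOne (μ : Measure X) (C : ℝ≥0) : Prop :=
  ∀ f : X → ℝ, Integrable f μ → ∀ α : ℝ, 0 < α →
    μ {x | ENNReal.ofReal α < uncenteredMaximal μ f x} ≤ C * (∫⁻ y, ‖f y‖₊ ∂μ) / ENNReal.ofReal α

theorem measure_ball_lt_of_lt_average {f : X → ℝ} {c : X} {r : ℝ} {a : ℝ≥0∞} (ha : a ≠ 0)
    (htop : μ (ball c r) < ∞) (hlt : a < (μ (ball c r))⁻¹ * ∫⁻ y in ball c r, ‖f y‖₊ ∂μ) :
    μ (ball c r) < (∫⁻ y, ‖f y‖₊ ∂μ) / a := by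
  rw [ENNReal.lt_div_iff_mul_lt (Or.inl ha) (Or.inl (ne_top_of_lt hlt)), mul_comm]
  rw [mul_comm, ← div_eq_mul_inv, ENNReal.lt_div_iff_mul_lt (Or.inr (ne_top_of_lt hlt))
    (Or.inl htop.ne)] at hlt
  exact hlt.trans_le (setLIntegral_le_lintegral _ _)

theorem setOf_lt_uncenteredMaximal_subset {E₁ E₂ K : Set X} (hcover : E₁ ∪ E₂ ∪ K = univ)
    {h : X → ℝ} (hh1 : ∀ x, 1 ≤ h x) {m n C₀ : ℝ} (hn : 0 ≤ n) (hC₀ : 0 ≤ C₀)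
    (hbig₂₁ : ∀ (c : X) (r : ℝ) (x : X), x ∈ E₂ → x ∈ ball c r →
      (ball c r ∩ E₁).Nonempty → ENNReal.ofReal (C₀⁻¹ * h x ^ n) ≤ μ (ball c r))
    (hbig₁ : ∀ (c : X) (r : ℝ) (x : X), x ∈ E₁ → x ∈ ball c r →
      (ball c r ∩ (E₂ ∪ K)).Nonempty → ENNReal.ofReal (C₀⁻¹ * h x ^ m) ≤ μ (ball c r))
    (f : X → ℝ) {α : ℝ} (hα : 0 < α) :
    {x | ENNReal.ofReal α < uncenteredMaximal μ f x} ⊆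
      (E₁ ∪ K) ∩ {x | ENNReal.ofReal α < uncenteredMaximalOn μ (E₁ ∪ K) f x} ∪
      (E₂ ∪ K) ∩ {x | ENNReal.ofReal α < uncenteredMaximalOn μ (E₂ ∪ K) f x} ∪
      {x ∈ E₁ | ENNReal.ofReal (C₀⁻¹ * h x ^ m) < (∫⁻ y, ‖f y‖₊ ∂μ) / ENNReal.ofReal α} ∪
      {x ∈ E₂ | ENNReal.ofReal (C₀⁻¹ * h x ^ n) < (∫⁻ y, ‖f y‖₊ ∂μ) / ENNReal.ofReal α} ∪
      {x ∈ K | ENNReal.ofReal C₀⁻¹ < (∫⁻ y, ‖f y‖₊ ∂μ) / ENNReal.ofReal α} := by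
  intro x hx
  obtain ⟨c, r, hxB, h0, htop, hlt⟩ := lt_uncenteredMaximal_iff.mp hx
  have hB := measure_ball_lt_of_lt_average (by simpa using hα) htop hlt
  have hmem (y : X) : y ∈ E₁ ∨ y ∈ E₂ ∨ y ∈ K := by
    have hy := mem_univ y
    rw [← hcover] at hy
    simpa only [mem_union, or_assoc] using hy
  by_cases h₂ : Disjoint (ball c r) E₂
  · have hsub : ball c r ⊆ E₁ ∪ K := fun y hy => by
      have := disjoint_left.mp h₂ hy; have := hmem y; tauto
    exact Or.inl <| Or.inl <| Or.inl <| Or.inl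
      ⟨hsub hxB, lt_uncenteredMaximalOn_of_ball_subset hsub hxB h0 htop hlt⟩
  by_cases h₁ : Disjoint (ball c r) E₁
  · have hsub : ball c r ⊆ E₂ ∪ K := fun y hy => by
      have := disjoint_left.mp h₁ hy; have := hmem y; tauto
    exact Or.inl <| Or.inl <| Or.inl <| Or.inr
      ⟨hsub hxB, lt_uncenteredMaximalOn_of_ball_subset hsub hxB h0 htop hlt⟩
  obtain ⟨z₂, hz₂⟩ := not_disjoint_iff_nonempty_inter.mp h₂
  have hmeet₁ := not_disjoint_iff_nonempty_inter.mp h₁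
  rcases hmem x with hx₁ | hx₂ | hxK
  · exact Or.inl <| Or.inl <| Or.inr
      ⟨hx₁, (hbig₁ c r x hx₁ hxB ⟨z₂, hz₂.1, Or.inl hz₂.2⟩).trans_lt hB⟩
  · exact Or.inl <| Or.inr ⟨hx₂, (hbig₂₁ c r x hx₂ hxB hmeet₁).trans_lt hB⟩
  · -- `h ≥ 1` at the point `z₂ ∈ E₂` of the ball gives `μ (ball c r) ≥ C₀⁻¹`
    have hC₀inv : ENNReal.ofReal C₀⁻¹ ≤ ENNReal.ofReal (C₀⁻¹ * h z₂ ^ n) :=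
      ENNReal.ofReal_le_ofReal <| le_mul_of_one_le_right (inv_nonneg.mpr hC₀)
        (Real.one_le_rpow (hh1 z₂) hn)
    exact Or.inr ⟨hxK, (hC₀inv.trans (hbig₂₁ c r z₂ hz₂.2 hz₂.1 hmeet₁)).trans_lt hB⟩

theorem maximalWeakTypeOneOne_of_cover {E₁ E₂ K : Set X} (hcover : E₁ ∪ E₂ ∪ K = univ)
    {h : X → ℝ} (hh1 : ∀ x, 1 ≤ h x) {m n C₀ : ℝ} (hm : 0 < m) (hn : 0 < n) (hC₀ : 0 < C₀)
    (hKvol : μ K ≤ ENNReal.ofReal C₀) {A₁ A₂ : ℝ≥0}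
    (hweak₁ : ∀ f : X → ℝ, Integrable f (μ.restrict (E₁ ∪ K)) → ∀ α : ℝ, 0 < α →
      μ ((E₁ ∪ K) ∩ {x | ENNReal.ofReal α < uncenteredMaximalOn μ (E₁ ∪ K) f x})
        ≤ A₁ * (∫⁻ y in E₁ ∪ K, ‖f y‖₊ ∂μ) / ENNReal.ofReal α)
    (hweak₂ : ∀ f : X → ℝ, Integrable f (μ.restrict (E₂ ∪ K)) → ∀ α : ℝ, 0 < α →
      μ ((E₂ ∪ K) ∩ {x | ENNReal.ofReal α < uncenteredMaximalOn μ (E₂ ∪ K) f x})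
        ≤ A₂ * (∫⁻ y in E₂ ∪ K, ‖f y‖₊ ∂μ) / ENNReal.ofReal α)
    (hbig₂₁ : ∀ (c : X) (r : ℝ) (x : X), x ∈ E₂ → x ∈ ball c r →
      (ball c r ∩ E₁).Nonempty → ENNReal.ofReal (C₀⁻¹ * h x ^ n) ≤ μ (ball c r))
    (hbig₁ : ∀ (c : X) (r : ℝ) (x : X), x ∈ E₁ → x ∈ ball c r →
      (ball c r ∩ (E₂ ∪ K)).Nonempty → ENNReal.ofReal (C₀⁻¹ * h x ^ m) ≤ μ (ball c r))
    (hdist₂ : ∀ R : ℝ, 1 ≤ R → μ {x ∈ E₂ | h x ≤ R} ≤ ENNReal.ofReal (C₀ * R ^ n))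
    (hdist₁ : ∀ R : ℝ, 1 ≤ R → μ {x ∈ E₁ | h x ≤ R} ≤ ENNReal.ofReal (C₀ * R ^ m)) :
    MaximalWeakTypeOneOne μ (A₁ + A₂ + 3 * (C₀ ^ 2).toNNReal) := by
  intro f hf α hα
  set s := (∫⁻ y, ‖f y‖₊ ∂μ) / ENNReal.ofReal α
  have hpiece {S : Set X} {A : ℝ≥0} (hS : ∀ f : X → ℝ, Integrable f (μ.restrict S) →
      ∀ α : ℝ, 0 < α → μ (S ∩ {x | ENNReal.ofReal α < uncenteredMaximalOn μ S f x})
        ≤ A * (∫⁻ y in S, ‖f y‖₊ ∂μ) / ENNReal.ofReal α) :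
      μ (S ∩ {x | ENNReal.ofReal α < uncenteredMaximalOn μ S f x}) ≤ A * s := by
    refine (hS f hf.restrict α hα).trans ?_
    rw [mul_div_assoc]
    gcongr
    exact ENNReal.div_le_div_right (setLIntegral_le_lintegral _ _) _
  have hK : μ {x ∈ K | ENNReal.ofReal C₀⁻¹ < s} ≤ ENNReal.ofReal (C₀ ^ 2) * s := by
    by_cases hs : ENNReal.ofReal C₀⁻¹ < s
    · calc _ ≤ μ K := measure_mono fun x hx => hx.1
        _ ≤ ENNReal.ofReal C₀ := hKvol
        _ = ENNReal.ofReal (C₀ ^ 2) * ENNReal.ofReal C₀⁻¹ := by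
            rw [← ENNReal.ofReal_mul (by positivity)]
            field_simp
        _ ≤ _ := by gcongr
    · simp [hs]
  calc μ {x | ENNReal.ofReal α < uncenteredMaximal μ f x}
      ≤ μ ((E₁ ∪ K) ∩ {x | ENNReal.ofReal α < uncenteredMaximalOn μ (E₁ ∪ K) f x} ∪
          (E₂ ∪ K) ∩ {x | ENNReal.ofReal α < uncenteredMaximalOn μ (E₂ ∪ K) f x} ∪
          {x ∈ E₁ | ENNReal.ofReal (C₀⁻¹ * h x ^ m) < s} ∪
          {x ∈ E₂ | ENNReal.ofReal (C₀⁻¹ * h x ^ n) < s} ∪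
          {x ∈ K | ENNReal.ofReal C₀⁻¹ < s}) :=
        measure_mono (setOf_lt_uncenteredMaximal_subset hcover hh1 hn.le hC₀.le hbig₂₁ hbig₁ f hα)
    _ ≤ A₁ * s + A₂ * s + ENNReal.ofReal (C₀ ^ 2) * s + ENNReal.ofReal (C₀ ^ 2) * s +
          ENNReal.ofReal (C₀ ^ 2) * s := by
        refine (measure_union_le _ _).trans (add_le_add ?_ hK)
        refine (measure_union_le _ _).trans (add_le_add ?_
          (measure_setOf_ofReal_rpow_lt_le hn hC₀ hh1 hdist₂ s))
        refine (measure_union_le _ _).trans (add_le_add ?_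
          (measure_setOf_ofReal_rpow_lt_le hm hC₀ hh1 hdist₁ s))
        exact (measure_union_le _ _).trans (add_le_add (hpiece hweak₁) (hpiece hweak₂))
    _ = (A₁ + A₂ + 3 * (C₀ ^ 2).toNNReal) * (∫⁻ y, ‖f y‖₊ ∂μ) / ENNReal.ofReal α := by
        have hC : ((C₀ ^ 2).toNNReal : ℝ≥0∞) = ENNReal.ofReal (C₀ ^ 2) := rfl
        rw [mul_div_assoc, hC]
        ring

end WeakType

section Truncation

variable {X : Type*} [MeasurableSpace X] {μ : Measure X} {f : X → ℝ}

theorem setLIntegral_lt_norm_le (hf : Measurable f) {q t : ℝ} (hq : 1 ≤ q) (ht : 0 < t) :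
    ∫⁻ x in {y | t < ‖f y‖}, ‖f x‖₊ ∂μ ≤ ENNReal.ofReal (t ^ (1 - q)) * ∫⁻ x, ‖f x‖ₑ ^ q ∂μ := by
  calc ∫⁻ x in {y | t < ‖f y‖}, ‖f x‖₊ ∂μ
      ≤ ∫⁻ x in {y | t < ‖f y‖}, ENNReal.ofReal (t ^ (1 - q)) * ‖f x‖ₑ ^ q ∂μ := by
        refine setLIntegral_mono' (measurableSet_lt measurable_const hf.norm) fun x hx => ?_
        have hx0 : 0 < ‖f x‖ := ht.trans hx
        have hreal : ‖f x‖ ≤ t ^ (1 - q) * ‖f x‖ ^ q := calc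
          ‖f x‖ = ‖f x‖ ^ (1 - q) * ‖f x‖ ^ q := by rw [← Real.rpow_add hx0]; simp
          _ ≤ t ^ (1 - q) * ‖f x‖ ^ q := mul_le_mul_of_nonneg_right
            (Real.rpow_le_rpow_of_nonpos ht (le_of_lt hx) (by linarith)) (by positivity)
        rw [← enorm_eq_nnnorm, ← ofReal_norm, ENNReal.ofReal_rpow_of_nonneg hx0.le (by linarith),
          ← ENNReal.ofReal_mul (by positivity)]
        exact ENNReal.ofReal_le_ofReal hreal
    _ ≤ ∫⁻ x, ENNReal.ofReal (t ^ (1 - q)) * ‖f x‖ₑ ^ q ∂μ := setLIntegral_le_lintegral _ _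
    _ = ENNReal.ofReal (t ^ (1 - q)) * ∫⁻ x, ‖f x‖ₑ ^ q ∂μ :=
        lintegral_const_mul' _ _ ENNReal.ofReal_ne_top

theorem integrableOn_lt_norm (hf : Measurable f) {q t : ℝ} (hq : 1 ≤ q) (ht : 0 < t)
    (hJ : ∫⁻ x, ‖f x‖ₑ ^ q ∂μ ≠ ∞) : IntegrableOn f {y | t < ‖f y‖} μ :=
  ⟨hf.aestronglyMeasurable, (setLIntegral_lt_norm_le hf hq ht).trans_lt
    (ENNReal.mul_lt_top ENNReal.ofReal_lt_top hJ.lt_top)⟩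

theorem integral_rpow_two_mul_mul {a q : ℝ} (ha : 0 ≤ a) (hq : 1 < q) :
    (∫ t in (0 : ℝ)..2 * a, t ^ (q - 2)) * a = 2 ^ (q - 1) / (q - 1) * a ^ q := by
  rw [integral_rpow (Or.inl (by linarith)), show q - 2 + 1 = q - 1 by ring,
    Real.zero_rpow (by linarith), Real.mul_rpow zero_le_two ha]
  have : a ^ q = a ^ (q - 1) * a := by rw [← Real.rpow_add_one' ha (by linarith)]; ring_nf
  rw [this]
  ring

/-- Layer-cake formula for `2 ‖f‖` with respect to the measure `ν` of density `‖f‖`: the tail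
`ν {t < 2 ‖f‖}` is the inner integral on the left. -/
theorem lintegral_rpow_mul_setLIntegral_lt_norm (hf : Measurable f) {q : ℝ} (hq : 1 < q) :
    ∫⁻ t in Ioi (0 : ℝ), ENNReal.ofReal (t ^ (q - 2)) * ∫⁻ x in {y | t / 2 < ‖f y‖}, ‖f x‖₊ ∂μ
      = ENNReal.ofReal (2 ^ (q - 1) / (q - 1)) * ∫⁻ x, ‖f x‖ₑ ^ q ∂μ := by
  set ν := μ.withDensity fun x => (‖f x‖₊ : ℝ≥0∞)
  have htail (t : ℝ) :
      ∫⁻ x in {y | t / 2 < ‖f y‖}, ‖f x‖₊ ∂μ = ν {y | t < 2 * ‖f y‖} := by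
    rw [withDensity_apply _ (measurableSet_lt measurable_const (hf.norm.const_mul 2))]
    congr 2
    ext y
    exact div_lt_iff₀' (two_pos : (0 : ℝ) < 2)
  have hlayer := lintegral_comp_eq_lintegral_meas_lt_mul ν (f := fun x => 2 * ‖f x‖)
    (g := fun t => t ^ (q - 2)) (ae_of_all _ fun x => by positivity)
    (hf.norm.const_mul 2).aemeasurable
    (fun _ _ => intervalIntegral.intervalIntegrable_rpow' (by linarith))
    ((ae_restrict_iff' measurableSet_Ioi).mpr (ae_of_all _ fun t ht => Real.rpow_nonneg
      (le_of_lt ht) _))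
  simp_rw [htail, mul_comm (ENNReal.ofReal _) (ν _), ← hlayer]
  rw [lintegral_withDensity_eq_lintegral_mul_non_measurable _ (by fun_prop)
      (ae_of_all _ fun _ => ENNReal.coe_lt_top),
    ← lintegral_const_mul' _ _ ENNReal.ofReal_ne_top]
  congr 1 with x
  rw [Pi.mul_apply, ← enorm_eq_nnnorm, ← ofReal_norm, ← ENNReal.ofReal_mul (by positivity),
    ENNReal.ofReal_rpow_of_nonneg (norm_nonneg _) (by linarith),
    ← ENNReal.ofReal_mul (by positivity), mul_comm, integral_rpow_two_mul_mul (norm_nonneg _) hq]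

end Truncation

section StrongType

variable {X : Type*} [MetricSpace X] [MeasurableSpace X] {μ : Measure X} {C : ℝ≥0} {f : X → ℝ}

/-- The part of `f` below height `t / 2` raises `M f` by at most `t / 2`, so the level set
`{t < M f}` is controlled by the weak bound for the part of `f` above `t / 2`. -/
theorem measure_lt_uncenteredMaximal_le (hweak : MaximalWeakTypeOneOne μ C) (hf : Measurable f)
    {t : ℝ} (ht : 0 < t) (hint : IntegrableOn f {y | t / 2 < ‖f y‖} μ) :
    μ {x | ENNReal.ofReal t < uncenteredMaximal μ f x}
      ≤ C * (∫⁻ x in {y | t / 2 < ‖f y‖}, ‖f x‖₊ ∂μ) / ENNReal.ofReal (t / 2) := by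
  set E := {y | t / 2 < ‖f y‖}
  have hE : MeasurableSet E := measurableSet_lt measurable_const hf.norm
  have hsplit (y : X) : (‖f y‖₊ : ℝ≥0∞) ≤ ‖E.indicator f y‖₊ + ENNReal.ofReal (t / 2) := by
    by_cases hy : y ∈ E
    · rw [indicator_of_mem hy]
      exact le_self_add
    · rw [indicator_of_notMem hy, nnnorm_zero, ENNReal.coe_zero, zero_add, ← enorm_eq_nnnorm,
        ← ofReal_norm]
      exact ENNReal.ofReal_le_ofReal (not_lt.mp hy)
  have hsub : {x | ENNReal.ofReal t < uncenteredMaximal μ f x}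
      ⊆ {x | ENNReal.ofReal (t / 2) < uncenteredMaximal μ (E.indicator f) x} := fun x hx => by
    have hlt := lt_of_lt_of_le hx (uncenteredMaximal_le_add hsplit)
    have hhalves : ENNReal.ofReal t = ENNReal.ofReal (t / 2) + ENNReal.ofReal (t / 2) := by
      rw [← ENNReal.ofReal_add (by positivity) (by positivity), add_halves]
    rw [hhalves] at hlt
    exact (ENNReal.add_lt_add_iff_right ENNReal.ofReal_ne_top).mp hlt
  calc _ ≤ _ := measure_mono hsub
    _ ≤ C * (∫⁻ y, ‖E.indicator f y‖₊ ∂μ) / ENNReal.ofReal (t / 2) :=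
        hweak _ ((integrable_indicator_iff hE).mpr hint) _ (by positivity)
    _ = C * (∫⁻ x in E, ‖f x‖₊ ∂μ) / ENNReal.ofReal (t / 2) := by
        rw [← lintegral_indicator hE]
        simp_rw [nnnorm_indicator_eq_indicator_nnnorm, ENNReal.coe_indicator]

theorem ae_uncenteredMaximal_lt_top (hweak : MaximalWeakTypeOneOne μ C) (hf : Measurable f)
    {q : ℝ} (hq : 1 ≤ q) (hJ : ∫⁻ x, ‖f x‖ₑ ^ q ∂μ ≠ ∞) :
    ∀ᵐ x ∂μ, uncenteredMaximal μ f x < ∞ := by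
  set J := ∫⁻ x, ‖f x‖ₑ ^ q ∂μ
  have hbound (t : ℝ) (ht : 2 ≤ t) :
      μ {x | ¬uncenteredMaximal μ f x < ∞} ≤ C * J / ENNReal.ofReal (t / 2) := by
    have ht2 : 1 ≤ t / 2 := by linarith
    calc _ ≤ μ {x | ENNReal.ofReal t < uncenteredMaximal μ f x} :=
          measure_mono fun x hx => lt_of_lt_of_le ENNReal.ofReal_lt_top (not_lt.mp hx)
      _ ≤ C * (∫⁻ x in {y | t / 2 < ‖f y‖}, ‖f x‖₊ ∂μ) / ENNReal.ofReal (t / 2) :=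
          measure_lt_uncenteredMaximal_le hweak hf (by linarith)
            (integrableOn_lt_norm hf hq (by linarith) hJ)
      _ ≤ C * (ENNReal.ofReal ((t / 2) ^ (1 - q)) * J) / ENNReal.ofReal (t / 2) := by
          gcongr
          exact setLIntegral_lt_norm_le hf hq (by linarith)
      _ ≤ C * J / ENNReal.ofReal (t / 2) := by
          gcongr
          refine mul_le_of_le_one_left bot_le (ENNReal.ofReal_le_one.mpr ?_)
          exact Real.rpow_le_one_of_one_le_of_nonpos ht2 (by linarith)
  have htend : Tendsto (fun t : ℝ => C * J / ENNReal.ofReal (t / 2)) atTop (𝓝 0) := by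
    simpa using ENNReal.Tendsto.const_div (a := C * J) (ENNReal.tendsto_ofReal_atTop.comp
      (tendsto_id.atTop_div_const two_pos)) (Or.inr (ENNReal.mul_ne_top ENNReal.coe_ne_top hJ))
  rw [ae_iff]
  exact nonpos_iff_eq_zero.mp (ge_of_tendsto htend (eventually_atTop.mpr ⟨2, hbound⟩))

theorem lintegral_uncenteredMaximal_rpow_le [BorelSpace X] (hweak : MaximalWeakTypeOneOne μ C)
    (hf : Measurable f) {q : ℝ} (hq : 1 < q) (hJ : ∫⁻ x, ‖f x‖ₑ ^ q ∂μ ≠ ∞) :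
    ∫⁻ x, uncenteredMaximal μ f x ^ q ∂μ ≤ ENNReal.ofReal q * (2 * C) *
      ENNReal.ofReal (2 ^ (q - 1) / (q - 1)) * ∫⁻ x, ‖f x‖ₑ ^ q ∂μ := by
  set G := fun x => (uncenteredMaximal μ f x).toReal
  have hlevel (t : ℝ) (ht : t ∈ Ioi 0) : μ {x | t < G x} * ENNReal.ofReal (t ^ (q - 1))
      ≤ 2 * C * (ENNReal.ofReal (t ^ (q - 2)) * ∫⁻ x in {y | t / 2 < ‖f y‖}, ‖f x‖₊ ∂μ) := by
    have ht : 0 < t := ht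
    have hpow : ENNReal.ofReal (t ^ (q - 1)) * (ENNReal.ofReal (t / 2))⁻¹
        = 2 * ENNReal.ofReal (t ^ (q - 2)) := by
      rw [← div_eq_mul_inv, ← ENNReal.ofReal_div_of_pos (by positivity), ← ENNReal.ofReal_ofNat 2,
        ← ENNReal.ofReal_mul zero_le_two, show q - 1 = q - 2 + 1 by ring,
        Real.rpow_add_one ht.ne']
      congr 1
      field_simp
    calc _ ≤ C * (∫⁻ x in {y | t / 2 < ‖f y‖}, ‖f x‖₊ ∂μ) / ENNReal.ofReal (t / 2) *
          ENNReal.ofReal (t ^ (q - 1)) := by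
          gcongr
          refine (measure_mono fun x hx => ?_).trans (measure_lt_uncenteredMaximal_le hweak hf ht
            (integrableOn_lt_norm hf hq.le (by positivity) hJ))
          exact ((ENNReal.ofReal_lt_ofReal_iff (ht.trans hx)).mpr hx).trans_le
            ENNReal.ofReal_toReal_le
      _ = C * (∫⁻ x in {y | t / 2 < ‖f y‖}, ‖f x‖₊ ∂μ) *
          (ENNReal.ofReal (t ^ (q - 1)) * (ENNReal.ofReal (t / 2))⁻¹) := by
          rw [div_eq_mul_inv]; ring
      _ = _ := by rw [hpow]; ring
  have hfin := ae_uncenteredMaximal_lt_top hweak hf hq.le hJ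
  calc ∫⁻ x, uncenteredMaximal μ f x ^ q ∂μ = ∫⁻ x, ENNReal.ofReal (G x ^ q) ∂μ :=
        lintegral_congr_ae <| hfin.mono fun x hx => by
          change _ = ENNReal.ofReal ((uncenteredMaximal μ f x).toReal ^ q)
          rw [← ENNReal.ofReal_rpow_of_nonneg ENNReal.toReal_nonneg (by linarith),
            ENNReal.ofReal_toReal hx.ne]
    _ = ENNReal.ofReal q * ∫⁻ t in Ioi 0, μ {x | t < G x} * ENNReal.ofReal (t ^ (q - 1)) :=
        lintegral_rpow_eq_lintegral_meas_lt_mul μ (ae_of_all _ fun _ => ENNReal.toReal_nonneg)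
          measurable_uncenteredMaximal.ennreal_toReal.aemeasurable (by linarith)
    _ ≤ ENNReal.ofReal q * ∫⁻ t in Ioi 0, 2 * C *
          (ENNReal.ofReal (t ^ (q - 2)) * ∫⁻ x in {y | t / 2 < ‖f y‖}, ‖f x‖₊ ∂μ) := by
        gcongr ENNReal.ofReal q * ?_
        exact setLIntegral_mono' measurableSet_Ioi hlevel
    _ = _ := by
        rw [lintegral_const_mul' _ _ (by finiteness), lintegral_rpow_mul_setLIntegral_lt_norm hf hq]
        ring

theorem exists_eLpNormENNReal_uncenteredMaximal_le [BorelSpace X]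
    (hweak : MaximalWeakTypeOneOne μ C) {p : ℝ≥0∞} (hp : 1 < p) :
    ∃ Cp : ℝ≥0, ∀ f : X → ℝ, MemLp f p μ →
      eLpNormENNReal (uncenteredMaximal μ f) p μ ≤ Cp * eLpNorm f p μ := by
  rcases eq_or_ne p ∞ with rfl | hp_top
  · refine ⟨1, fun f _ => ?_⟩
    rw [eLpNormENNReal, if_pos rfl, ENNReal.coe_one, one_mul]
    exact essSup_le_of_ae_le _ (ae_of_all _ uncenteredMaximal_le_eLpNorm_top)
  have hp0 : p ≠ 0 := (zero_lt_one.trans hp).ne'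
  set q := p.toReal
  have hq : 1 < q := by simpa using ENNReal.toReal_strict_mono hp_top hp
  set A := ENNReal.ofReal q * (2 * C) * ENNReal.ofReal (2 ^ (q - 1) / (q - 1))
  have hA : A ^ (1 / q) ≠ ∞ := ENNReal.rpow_ne_top_of_nonneg (by positivity) (by finiteness)
  refine ⟨(A ^ (1 / q)).toNNReal, fun f hf => ?_⟩
  obtain ⟨g, hg, hfg⟩ := hf.1
  have hJ := lintegral_rpow_enorm_lt_top_of_eLpNorm_lt_top hp0 hp_top
    (hf.ae_eq hfg).eLpNorm_lt_top
  rw [uncenteredMaximal_congr_ae hfg, eLpNorm_congr_ae hfg, eLpNormENNReal, if_neg hp_top,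
    eLpNorm_eq_lintegral_rpow_enorm_toReal hp0 hp_top, ENNReal.coe_toNNReal hA,
    ← ENNReal.mul_rpow_of_nonneg _ _ (by positivity)]
  exact ENNReal.rpow_le_rpow (lintegral_uncenteredMaximal_rpow_le hweak hg.measurable hq hJ.ne)
    (by positivity)

end StrongType

theorem statement0_general
    {X : Type*} [MetricSpace X] [MeasurableSpace X] [BorelSpace X]
    (μ : Measure X) (m n : ℝ) (hn : 2 < n) (hnm : n < m)
    (E₁ E₂ K : Set X)
    (hcover : E₁ ∪ E₂ ∪ K = Set.univ)
    (h : X → ℝ) (hh1 : ∀ x, 1 ≤ h x)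
    (C₀ : ℝ) (hC₀ : 1 ≤ C₀)
    -- (i) the central part has finite measure
    (hKvol : μ K ≤ ENNReal.ofReal C₀)
    -- (iii) the maximal operators of the subspaces `E₁ ∪ K` and `E₂ ∪ K`
    -- are of weak type (1,1), with constants `A₁`, `A₂`
    (A₁ A₂ : ℝ≥0)
    (hweak₁ : ∀ f : X → ℝ, Integrable f (μ.restrict (E₁ ∪ K)) → ∀ α : ℝ, 0 < α →
      μ ((E₁ ∪ K) ∩ {x | ENNReal.ofReal α < uncenteredMaximalOn μ (E₁ ∪ K) f x})
        ≤ A₁ * (∫⁻ y in E₁ ∪ K, ‖f y‖₊ ∂μ) / ENNReal.ofReal α)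
    (hweak₂ : ∀ f : X → ℝ, Integrable f (μ.restrict (E₂ ∪ K)) → ∀ α : ℝ, 0 < α →
      μ ((E₂ ∪ K) ∩ {x | ENNReal.ofReal α < uncenteredMaximalOn μ (E₂ ∪ K) f x})
        ≤ A₂ * (∫⁻ y in E₂ ∪ K, ‖f y‖₊ ∂μ) / ENNReal.ofReal α)
    -- (iv) lower volume bounds for balls joining different parts
    (hbig₂₁ : ∀ (c : X) (r : ℝ) (x : X), x ∈ E₂ → x ∈ ball c r →
      (ball c r ∩ E₁).Nonempty → ENNReal.ofReal (C₀⁻¹ * h x ^ n) ≤ μ (ball c r))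
    (hbig₁ : ∀ (c : X) (r : ℝ) (x : X), x ∈ E₁ → x ∈ ball c r →
      (ball c r ∩ (E₂ ∪ K)).Nonempty → ENNReal.ofReal (C₀⁻¹ * h x ^ m) ≤ μ (ball c r))
    -- (v) distribution of `h` on the two ends
    (hdist₂ : ∀ R : ℝ, 1 ≤ R → μ {x ∈ E₂ | h x ≤ R} ≤ ENNReal.ofReal (C₀ * R ^ n))
    (hdist₁ : ∀ R : ℝ, 1 ≤ R → μ {x ∈ E₁ | h x ≤ R} ≤ ENNReal.ofReal (C₀ * R ^ m)) :
    -- conclusion: weak type (1,1) and `L^p` boundedness of the maximal operator of `X`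
    (∃ C : ℝ≥0, ∀ f : X → ℝ, Integrable f μ → ∀ α : ℝ, 0 < α →
      μ {x | ENNReal.ofReal α < uncenteredMaximal μ f x}
        ≤ C * (∫⁻ y, ‖f y‖₊ ∂μ) / ENNReal.ofReal α) ∧
    (∀ p : ℝ≥0∞, 1 < p → ∃ Cp : ℝ≥0, ∀ f : X → ℝ, MemLp f p μ →
      eLpNormENNReal (uncenteredMaximal μ f) p μ ≤ Cp * eLpNorm f p μ) := by
  have hweak := maximalWeakTypeOneOne_of_cover hcover hh1 (by linarith) (by linarith)
    (by linarith) hKvol hweak₁ hweak₂ hbig₂₁ hbig₁ hdist₂ hdist₁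
  exact ⟨⟨_, hweak⟩, fun p hp => exists_eLpNormENNReal_uncenteredMaximal_le hweak hp⟩

theorem statement0
    {X : Type*} [MetricSpace X] [MeasurableSpace X] [BorelSpace X]
    (μ : Measure X) (m n : ℝ) (hn : 2 < n) (hnm : n < m)
    (E₁ E₂ K : Set X) (hE₁ : MeasurableSet E₁) (hE₂ : MeasurableSet E₂)
    (hK : MeasurableSet K)
    (hd₁₂ : Disjoint E₁ E₂) (hd₁K : Disjoint E₁ K) (hd₂K : Disjoint E₂ K)
    (hcover : E₁ ∪ E₂ ∪ K = Set.univ)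
    (h : X → ℝ) (hh_meas : Measurable h) (hh1 : ∀ x, 1 ≤ h x)
    (C₀ : ℝ) (hC₀ : 1 ≤ C₀)
    -- (i) the central part has finite measure
    (hKvol : μ K ≤ ENNReal.ofReal C₀)
    -- (ii) volume of small balls
    (hball_low : ∀ (x : X) (r : ℝ), 0 < r → r ≤ 1 →
      ENNReal.ofReal (C₀⁻¹ * r ^ m) ≤ μ (ball x r))
    (hball_up : ∀ (x : X) (r : ℝ), 0 < r → r ≤ 1 →
      μ (ball x r) ≤ ENNReal.ofReal (C₀ * r ^ m))
    -- (iii) the maximal operators of the subspaces `E₁ ∪ K` and `E₂ ∪ K`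
    -- are of weak type (1,1), with constants `A₁`, `A₂`
    (A₁ A₂ : ℝ≥0)
    (hweak₁ : ∀ f : X → ℝ, Integrable f (μ.restrict (E₁ ∪ K)) → ∀ α : ℝ, 0 < α →
      μ ((E₁ ∪ K) ∩ {x | ENNReal.ofReal α < uncenteredMaximalOn μ (E₁ ∪ K) f x})
        ≤ A₁ * (∫⁻ y in E₁ ∪ K, ‖f y‖₊ ∂μ) / ENNReal.ofReal α)
    (hweak₂ : ∀ f : X → ℝ, Integrable f (μ.restrict (E₂ ∪ K)) → ∀ α : ℝ, 0 < α →
      μ ((E₂ ∪ K) ∩ {x | ENNReal.ofReal α < uncenteredMaximalOn μ (E₂ ∪ K) f x})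
        ≤ A₂ * (∫⁻ y in E₂ ∪ K, ‖f y‖₊ ∂μ) / ENNReal.ofReal α)
    -- (iv) lower volume bounds for balls joining different parts
    (hbig₂₁ : ∀ (c : X) (r : ℝ) (x : X), x ∈ E₂ → x ∈ ball c r →
      (ball c r ∩ E₁).Nonempty → ENNReal.ofReal (C₀⁻¹ * h x ^ n) ≤ μ (ball c r))
    (hbig₂K : ∀ (c : X) (r : ℝ) (x : X), x ∈ E₂ → 2 < h x → x ∈ ball c r →
      (ball c r ∩ K).Nonempty → ENNReal.ofReal (C₀⁻¹ * h x ^ n) ≤ μ (ball c r))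
    (hbig₁ : ∀ (c : X) (r : ℝ) (x : X), x ∈ E₁ → x ∈ ball c r →
      (ball c r ∩ (E₂ ∪ K)).Nonempty → ENNReal.ofReal (C₀⁻¹ * h x ^ m) ≤ μ (ball c r))
    -- (v) distribution of `h` on the two ends
    (hdist₂ : ∀ R : ℝ, 1 ≤ R → μ {x ∈ E₂ | h x ≤ R} ≤ ENNReal.ofReal (C₀ * R ^ n))
    (hdist₁ : ∀ R : ℝ, 1 ≤ R → μ {x ∈ E₁ | h x ≤ R} ≤ ENNReal.ofReal (C₀ * R ^ m)) :
    -- conclusion: weak type (1,1) and `L^p` boundedness of the maximal operator of `X`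
    (∃ C : ℝ≥0, ∀ f : X → ℝ, Integrable f μ → ∀ α : ℝ, 0 < α →
      μ {x | ENNReal.ofReal α < uncenteredMaximal μ f x}
        ≤ C * (∫⁻ y, ‖f y‖₊ ∂μ) / ENNReal.ofReal α) ∧
    (∀ p : ℝ≥0∞, 1 < p → ∃ Cp : ℝ≥0, ∀ f : X → ℝ, MemLp f p μ →
      eLpNormENNReal (uncenteredMaximal μ f) p μ ≤ Cp * eLpNorm f p μ) :=
  statement0_general μ m n hn hnm E₁ E₂ K hcover h hh1 C₀ hC₀ hKvol A₁ A₂ hweak₁ hweak₂ hbig₂₁ hbig₁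
    hdist₂ hdist₁
end

section
/- Let (X,d,μ) be a metric measure space with μ a Borel measure. Assume there are constants C₀ ≥ 1 and v₀ > 0 such that μ(B(x,2r)) ≤ C₀ μ(B(x,r)) for every x ∈ X and every 0 < r ≤ 4, and μ(B(x,1)) ≥ v₀ for every x ∈ X. Then there is a constant C, depending only on C₀, such that for every f ∈ L¹(μ) and every α > 0 with α ≥ ‖f‖_{L¹(μ)}/v₀, one has μ({x ∈ X : Mf(x) > α}) ≤ C ‖f‖_{L¹(μ)}/α, where M is the uncentered Hardy–Littlewood maximal operator of (X,d,μ). -/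
open MeasureTheory Metric ENNReal NNReal Filter

/-! If `Mf x > α`, some ball `B = B(c, r) ∋ x` has `α μ(B) < ∫_B |f| ≤ ‖f‖₁ ≤ α v₀`, so
`μ(B) < v₀ ≤ μ(B(c, 1))` and `r ≤ 1`. The Vitali lemma extracts from these balls a disjoint subfamily
whose fourfold dilations cover them all; two steps of local doubling give `μ(4B) ≤ C₀² μ(B)`, and
disjointness gives `α ∑ μ(B) ≤ ‖f‖₁`. The subfamily is countable because its balls carry positive
mass for the finite measure `|f| dμ`. -/

section

open Set

variable {X : Type*} [MetricSpace X] [MeasurableSpace X]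

theorem measure_ball_two_pow_mul_le {μ : Measure X} {C : ℝ≥0∞} {R : ℝ}
    (hdouble : ∀ (x : X) (r : ℝ), 0 < r → r ≤ R → μ (ball x (2 * r)) ≤ C * μ (ball x r))
    (x : X) {r : ℝ} (hr : 0 < r) :
    ∀ n : ℕ, 2 ^ n * r ≤ 2 * R → μ (ball x (2 ^ n * r)) ≤ C ^ n * μ (ball x r)
  | 0, _ => by simp
  | n + 1, hn => by
    have hnR : 2 ^ n * r ≤ R := by rw [pow_succ] at hn; linarith
    have hn_pos : 0 < 2 ^ n * r := by positivity
    calc μ (ball x (2 ^ (n + 1) * r)) = μ (ball x (2 * (2 ^ n * r))) := by ring_nf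
      _ ≤ C * μ (ball x (2 ^ n * r)) := hdouble x _ hn_pos hnR
      _ ≤ C * (C ^ n * μ (ball x r)) := by
          gcongr
          exact measure_ball_two_pow_mul_le hdouble x hr n (by linarith)
      _ = C ^ (n + 1) * μ (ball x r) := by ring

theorem exists_ball_of_lt_uncenteredMaximal {μ : Measure X} {f : X → ℝ} {a : ℝ≥0∞} {x : X}
    (hx : a < uncenteredMaximal μ f x) :
    ∃ c r, x ∈ ball c r ∧ a * μ (ball c r) < ∫⁻ y in ball c r, ‖f y‖₊ ∂μ := by
  simp only [uncenteredMaximal, lt_iSup_iff] at hx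
  obtain ⟨c, r, hxb, hpos, hfin, hlt⟩ := hx
  rw [mul_comm, ← div_eq_mul_inv] at hlt
  exact ⟨c, r, hxb, (ENNReal.lt_div_iff_mul_lt (Or.inl hpos.ne') (Or.inl hfin.ne)).1 hlt⟩

variable [OpensMeasurableSpace X]

theorem tsum_measure_ball_le_of_pairwiseDisjoint (ν : Measure X) {u : Set (X × ℝ)}
    (hdisj : u.PairwiseDisjoint fun p => ball p.1 p.2) :
    ∑' p : u, ν (ball p.1.1 p.1.2) ≤ ν univ :=
  (tsum_meas_le_meas_iUnion_of_disjoint ν (fun _ => measurableSet_ball) hdisj.subtype).trans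
    (measure_mono (subset_univ _))

theorem countable_of_pairwiseDisjoint_ball (ν : Measure X) [IsFiniteMeasure ν]
    {u : Set (X × ℝ)} (hdisj : u.PairwiseDisjoint fun p => ball p.1 p.2)
    (hpos : ∀ p ∈ u, 0 < ν (ball p.1 p.2)) : u.Countable := by
  have hsupp := Summable.countable_support_ennreal
    ((tsum_measure_ball_le_of_pairwiseDisjoint ν hdisj).trans_lt (measure_lt_top ν univ)).ne
  rw [Function.support_eq_univ fun p : u => (hpos p.1 p.2).ne', countable_univ_iff] at hsupp
  exact countable_coe_iff.1 hsupp

theorem measure_biUnion_ball_le {μ ν : Measure X} [IsFiniteMeasure ν] {a C : ℝ≥0∞} (ha : a ≠ 0)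
    {R : ℝ} {t : Set (X × ℝ)} (hR : ∀ p ∈ t, p.2 ≤ R)
    (hheavy : ∀ p ∈ t, a * μ (ball p.1 p.2) < ν (ball p.1 p.2))
    (hdilate : ∀ p ∈ t, μ (ball p.1 (4 * p.2)) ≤ C * μ (ball p.1 p.2)) :
    μ (⋃ p ∈ t, ball p.1 p.2) ≤ C * ν univ / a := by
  obtain ⟨u, hut, hdisj, hcov⟩ :=
    Vitali.exists_disjoint_subfamily_covering_enlargement_ball t Prod.fst Prod.snd R hR 4
      (by norm_num)
  have hu : u.Countable := countable_of_pairwiseDisjoint_ball ν hdisj fun p hp =>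
    pos_of_gt (hheavy p (hut hp))
  have hsum : a * ∑' p : u, μ (ball p.1.1 p.1.2) ≤ ν univ := by
    rw [← ENNReal.tsum_mul_left]
    exact (ENNReal.tsum_le_tsum fun p : u => (hheavy p.1 (hut p.2)).le).trans
      (tsum_measure_ball_le_of_pairwiseDisjoint ν hdisj)
  calc μ (⋃ p ∈ t, ball p.1 p.2) ≤ μ (⋃ p ∈ u, ball p.1 (4 * p.2)) :=
        measure_mono <| iUnion₂_subset fun p hp =>
          let ⟨q, hq, hpq⟩ := hcov p hp
          hpq.trans (subset_biUnion_of_mem (u := fun q : X × ℝ => ball q.1 (4 * q.2)) hq)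
    _ ≤ ∑' p : u, μ (ball p.1.1 (4 * p.1.2)) := measure_biUnion_le μ hu _
    _ ≤ ∑' p : u, C * μ (ball p.1.1 p.1.2) := ENNReal.tsum_le_tsum fun p => hdilate p.1 (hut p.2)
    _ = C * ∑' p : u, μ (ball p.1.1 p.1.2) := ENNReal.tsum_mul_left
    _ ≤ C * (ν univ / a) := by
        gcongr
        exact (ENNReal.le_div_iff_mul_le (Or.inl ha) (Or.inr (measure_ne_top ν _))).2
          (by rwa [mul_comm])
    _ = C * ν univ / a := (mul_div_assoc _ _ _).symm

theorem setOf_lt_uncenteredMaximal_subset_s2 {μ : Measure X} {f : X → ℝ} {a v : ℝ≥0∞}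
    (hunit : ∀ x : X, v ≤ μ (ball x 1)) (hf : ∫⁻ y, ‖f y‖₊ ∂μ ≤ a * v) :
    {x | a < uncenteredMaximal μ f x} ⊆
      ⋃ p ∈ {p : X × ℝ | 0 < p.2 ∧ p.2 ≤ 1 ∧
        a * μ (ball p.1 p.2) < μ.withDensity (fun y => ‖f y‖₊) (ball p.1 p.2)}, ball p.1 p.2 := by
  intro x hx
  obtain ⟨c, r, hxr, hheavy⟩ := exists_ball_of_lt_uncenteredMaximal hx
  have hsmall : μ (ball c r) < v := lt_of_mul_lt_mul_left' <|
    hheavy.trans_le ((setLIntegral_le_lintegral _ _).trans hf)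
  have hr : r ≤ 1 := le_of_not_gt fun h1r =>
    ((hunit c).trans (measure_mono (ball_subset_ball h1r.le))).not_gt hsmall
  rw [← withDensity_apply _ measurableSet_ball] at hheavy
  exact mem_biUnion (x := (c, r)) ⟨pos_of_mem_ball hxr, hr, hheavy⟩ hxr

end

theorem statement2_general
    {X : Type*} [MetricSpace X] [MeasurableSpace X] [BorelSpace X]
    (μ : Measure X) (C₀ v₀ : ℝ)
    -- local doubling
    (hdouble : ∀ (x : X) (r : ℝ), 0 < r → r ≤ 4 →
      μ (ball x (2 * r)) ≤ ENNReal.ofReal C₀ * μ (ball x r))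
    -- unit balls have measure at least `v₀`
    (hunit : ∀ x : X, ENNReal.ofReal v₀ ≤ μ (ball x 1)) :
    ∃ C : ℝ≥0, ∀ f : X → ℝ, Integrable f μ → ∀ α : ℝ, 0 < α →
      (∫⁻ y, ‖f y‖₊ ∂μ) / ENNReal.ofReal v₀ ≤ ENNReal.ofReal α →
      μ {x | ENNReal.ofReal α < uncenteredMaximal μ f x}
        ≤ C * (∫⁻ y, ‖f y‖₊ ∂μ) / ENNReal.ofReal α := by
  refine ⟨C₀.toNNReal ^ 2, fun f _ α hα hsmall => ?_⟩
  set ν := μ.withDensity fun y => (‖f y‖₊ : ℝ≥0∞)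
  have hνX : ν Set.univ = ∫⁻ y, ‖f y‖₊ ∂μ := by
    rw [withDensity_apply _ MeasurableSet.univ, Measure.restrict_univ]
  have hf : ∫⁻ y, ‖f y‖₊ ∂μ ≤ ENNReal.ofReal α * ENNReal.ofReal v₀ :=
    (ENNReal.div_le_iff_le_mul (Or.inr ofReal_ne_top) (Or.inl ofReal_ne_top)).1 hsmall
  have : IsFiniteMeasure ν := ⟨hνX ▸ hf.trans_lt (mul_lt_top ofReal_lt_top ofReal_lt_top)⟩
  have hdilate : ∀ p : X × ℝ, 0 < p.2 → p.2 ≤ 1 →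
      μ (ball p.1 (4 * p.2)) ≤ ENNReal.ofReal C₀ ^ 2 * μ (ball p.1 p.2) := fun p h0 h1 => by
    simpa only [show (2 : ℝ) ^ 2 = 4 by norm_num] using
      measure_ball_two_pow_mul_le hdouble p.1 h0 2 (by linarith)
  calc μ {x | ENNReal.ofReal α < uncenteredMaximal μ f x}
      ≤ ENNReal.ofReal C₀ ^ 2 * ν Set.univ / ENNReal.ofReal α :=
        (measure_mono (setOf_lt_uncenteredMaximal_subset_s2 hunit hf)).trans <|
          measure_biUnion_ball_le (ENNReal.ofReal_pos.2 hα).ne' (fun p hp => hp.2.1)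
            (fun p hp => hp.2.2) fun p hp => hdilate p hp.1 hp.2.1
    _ = (C₀.toNNReal ^ 2 : ℝ≥0) * (∫⁻ y, ‖f y‖₊ ∂μ) / ENNReal.ofReal α := by
        rw [hνX, ENNReal.coe_pow]
        rfl

theorem statement2
    {X : Type*} [MetricSpace X] [MeasurableSpace X] [BorelSpace X]
    (μ : Measure X) (C₀ v₀ : ℝ) (hC₀ : 1 ≤ C₀) (hv₀ : 0 < v₀)
    -- local doubling
    (hdouble : ∀ (x : X) (r : ℝ), 0 < r → r ≤ 4 →
      μ (ball x (2 * r)) ≤ ENNReal.ofReal C₀ * μ (ball x r))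
    -- unit balls have measure at least `v₀`
    (hunit : ∀ x : X, ENNReal.ofReal v₀ ≤ μ (ball x 1)) :
    ∃ C : ℝ≥0, ∀ f : X → ℝ, Integrable f μ → ∀ α : ℝ, 0 < α →
      (∫⁻ y, ‖f y‖₊ ∂μ) / ENNReal.ofReal v₀ ≤ ENNReal.ofReal α →
      μ {x | ENNReal.ofReal α < uncenteredMaximal μ f x}
        ≤ C * (∫⁻ y, ‖f y‖₊ ∂μ) / ENNReal.ofReal α :=
  statement2_general μ C₀ v₀ hdouble hunit
end

section
/- Let (X,d,μ) be a metric measure space with μ a Borel measure, let E and S be disjoint measurable subsets of X, let s > 0, C₀ ≥ 1, and let h : E → [1,∞) be measurable. Assume: (i) every open ball B of X with B ∩ S ≠ ∅ that contains a point x ∈ E satisfies μ(B) ≥ C₀⁻¹ h(x)^s; (ii) μ({x ∈ E : h(x) ≤ R}) ≤ C₀ R^s for every R ≥ 1. Then there is a constant C = C(C₀) such that for every f ∈ L¹(μ) vanishing μ-almost everywhere outside S and every α > 0, μ({x ∈ E : Mf(x) > α}) ≤ C ‖f‖_{L¹(μ)}/α, where M is the uncentered Hardy–Littlewood maximal operator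 of (X,d,μ). -/
/-!
A ball that carries any mass of `f` must meet `S`, so by (i) its average of `|f|` at a point
`x ∈ E` is at most `C₀ ‖f‖₁ h(x)^{-s}`. Hence `Mf(x) > α` forces `h(x)^s ≤ C₀ ‖f‖₁ / α`, and (ii)
bounds the measure of that part of `E` by `C₀² ‖f‖₁ / α`.
-/

open MeasureTheory Metric ENNReal NNReal Filter

lemma setLIntegral_nnnorm_eq_zero_of_disjoint {α F : Type*} [MeasurableSpace α]
    [NormedAddCommGroup F] {μ : Measure α} {f : α → F} {S t : Set α} (ht : MeasurableSet t)
    (hts : Disjoint t S) (hf0 : ∀ᵐ y ∂μ, y ∉ S → f y = 0) :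
    ∫⁻ y in t, ‖f y‖₊ ∂μ = 0 := by
  refine lintegral_eq_zero_of_ae_eq_zero ?_
  filter_upwards [ae_restrict_of_ae hf0, ae_restrict_mem ht] with y hy hyt
  simp [hy (hts.notMem_of_mem_left hyt)]

lemma uncenteredMaximal_le_lintegral_div {X : Type*} [MetricSpace X] [MeasurableSpace X]
    [OpensMeasurableSpace X] {μ : Measure X} {f : X → ℝ} {S : Set X} {x : X} {m : ℝ≥0∞}
    (hf0 : ∀ᵐ y ∂μ, y ∉ S → f y = 0)
    (hm : ∀ (c : X) (r : ℝ), x ∈ ball c r → (ball c r ∩ S).Nonempty → m ≤ μ (ball c r)) :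
    uncenteredMaximal μ f x ≤ (∫⁻ y, ‖f y‖₊ ∂μ) / m := by
  simp only [uncenteredMaximal, iSup_le_iff]
  intro c r hx _ _
  rcases Set.eq_empty_or_nonempty (ball c r ∩ S) with hBS | hBS
  · rw [setLIntegral_nnnorm_eq_zero_of_disjoint measurableSet_ball
      (Set.disjoint_iff_inter_eq_empty.mpr hBS) hf0, mul_zero]
    exact zero_le
  · rw [mul_comm, ← div_eq_mul_inv]
    exact ENNReal.div_le_div (setLIntegral_le_lintegral _ _) (hm c r hx hBS)

lemma measure_setOf_rpow_le {X : Type*} [MeasurableSpace X] {μ : Measure X} {E : Set X}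
    {h : X → ℝ} {s C₀ : ℝ} (hs : 0 < s) (hh1 : ∀ x ∈ E, 1 ≤ h x)
    (hdist : ∀ R : ℝ, 1 ≤ R → μ {x ∈ E | h x ≤ R} ≤ ENNReal.ofReal (C₀ * R ^ s)) (K : ℝ) :
    μ {x ∈ E | h x ^ s ≤ K} ≤ ENNReal.ofReal (C₀ * K) := by
  rcases lt_or_ge K 1 with hK | hK
  · have hempty : {x ∈ E | h x ^ s ≤ K} = ∅ :=
      Set.eq_empty_of_forall_notMem fun x ⟨hxE, hx⟩ =>
        (hK.trans_le (Real.one_le_rpow (hh1 x hxE) hs.le)).not_ge hx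
    rw [hempty, measure_empty]
    exact zero_le
  · have hsub : {x ∈ E | h x ^ s ≤ K} ⊆ {x ∈ E | h x ≤ K ^ s⁻¹} := fun x ⟨hxE, hx⟩ =>
      ⟨hxE, (Real.le_rpow_inv_iff_of_pos (zero_le_one.trans (hh1 x hxE))
        (zero_le_one.trans hK) hs).mpr hx⟩
    calc μ {x ∈ E | h x ^ s ≤ K}
        ≤ μ {x ∈ E | h x ≤ K ^ s⁻¹} := measure_mono hsub
      _ ≤ ENNReal.ofReal (C₀ * (K ^ s⁻¹) ^ s) :=
          hdist _ (Real.one_le_rpow hK (inv_pos.mpr hs).le)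
      _ = ENNReal.ofReal (C₀ * K) := by
          rw [Real.rpow_inv_rpow (zero_le_one.trans hK) hs.ne']

lemma le_of_ofReal_lt_div_ofReal {a b t : ℝ} {I : ℝ≥0∞} (ha : 0 < a) (hb : 0 < b) (hI : I ≠ ∞)
    (hlt : ENNReal.ofReal a < I / ENNReal.ofReal (b⁻¹ * t)) : t ≤ b * I.toReal / a := by
  have hmul : ENNReal.ofReal (a * (b⁻¹ * t)) ≤ I := by
    rw [ENNReal.ofReal_mul ha.le]
    exact ENNReal.mul_le_of_le_div hlt.le
  have hreal := (ENNReal.ofReal_le_iff_le_toReal hI).mp hmul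
  rw [le_div_iff₀ ha]
  calc t * a = b * (a * (b⁻¹ * t)) := by field_simp
    _ ≤ b * I.toReal := by gcongr

theorem statement11_general
    {X : Type*} [MetricSpace X] [MeasurableSpace X] [BorelSpace X]
    (μ : Measure X) (E S : Set X)
    (s C₀ : ℝ) (hs : 0 < s) (hC₀ : 1 ≤ C₀)
    (h : X → ℝ) (hh1 : ∀ x ∈ E, 1 ≤ h x)
    -- (i) every open ball meeting `S` and containing a point `x ∈ E` has measure
    -- at least `C₀⁻¹ h(x)^s`
    (hball : ∀ (c : X) (r : ℝ), ∀ x ∈ E, x ∈ ball c r → (ball c r ∩ S).Nonempty →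
      ENNReal.ofReal (C₀⁻¹ * h x ^ s) ≤ μ (ball c r))
    -- (ii) distribution of `h` on `E`
    (hdist : ∀ R : ℝ, 1 ≤ R → μ {x ∈ E | h x ≤ R} ≤ ENNReal.ofReal (C₀ * R ^ s)) :
    ∃ C : ℝ≥0, ∀ f : X → ℝ, Integrable f μ → (∀ᵐ y ∂μ, y ∉ S → f y = 0) →
      ∀ α : ℝ, 0 < α →
        μ {x ∈ E | ENNReal.ofReal α < uncenteredMaximal μ f x}
          ≤ C * (∫⁻ y, ‖f y‖₊ ∂μ) / ENNReal.ofReal α := by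
  have hC₀pos : 0 < C₀ := zero_lt_one.trans_le hC₀
  refine ⟨(C₀ ^ 2).toNNReal, fun f hf hf0 α hα => ?_⟩
  set I := ∫⁻ y, ‖f y‖₊ ∂μ
  have hI : I ≠ ∞ := hf.2.ne
  have hsub : {x ∈ E | ENNReal.ofReal α < uncenteredMaximal μ f x}
      ⊆ {x ∈ E | h x ^ s ≤ C₀ * I.toReal / α} := fun x ⟨hxE, hx⟩ =>
    ⟨hxE, le_of_ofReal_lt_div_ofReal hα hC₀pos hI <| hx.trans_le <|
      uncenteredMaximal_le_lintegral_div hf0 fun c r hxB hBS => hball c r x hxE hxB hBS⟩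
  calc μ {x ∈ E | ENNReal.ofReal α < uncenteredMaximal μ f x}
      ≤ μ {x ∈ E | h x ^ s ≤ C₀ * I.toReal / α} := measure_mono hsub
    _ ≤ ENNReal.ofReal (C₀ * (C₀ * I.toReal / α)) := measure_setOf_rpow_le hs hh1 hdist _
    _ = (C₀ ^ 2).toNNReal * I / ENNReal.ofReal α := by
        rw [← mul_div_assoc, ← mul_assoc, ← sq, ENNReal.ofReal_div_of_pos hα,
          ENNReal.ofReal_mul (by positivity), ENNReal.ofReal_toReal hI]
        rfl

theorem statement11
    {X : Type*} [MetricSpace X] [MeasurableSpace X] [BorelSpace X]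
    (μ : Measure X) (E S : Set X) (hE : MeasurableSet E) (hS : MeasurableSet S)
    (hES : Disjoint E S)
    (s C₀ : ℝ) (hs : 0 < s) (hC₀ : 1 ≤ C₀)
    (h : X → ℝ) (hh_meas : Measurable (E.restrict h)) (hh1 : ∀ x ∈ E, 1 ≤ h x)
    -- (i) every open ball meeting `S` and containing a point `x ∈ E` has measure
    -- at least `C₀⁻¹ h(x)^s`
    (hball : ∀ (c : X) (r : ℝ), ∀ x ∈ E, x ∈ ball c r → (ball c r ∩ S).Nonempty →
      ENNReal.ofReal (C₀⁻¹ * h x ^ s) ≤ μ (ball c r))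
    -- (ii) distribution of `h` on `E`
    (hdist : ∀ R : ℝ, 1 ≤ R → μ {x ∈ E | h x ≤ R} ≤ ENNReal.ofReal (C₀ * R ^ s)) :
    ∃ C : ℝ≥0, ∀ f : X → ℝ, Integrable f μ → (∀ᵐ y ∂μ, y ∉ S → f y = 0) →
      ∀ α : ℝ, 0 < α →
        μ {x ∈ E | ENNReal.ofReal α < uncenteredMaximal μ f x}
          ≤ C * (∫⁻ y, ‖f y‖₊ ∂μ) / ENNReal.ofReal α :=
  statement11_general μ E S s C₀ hs hC₀ h hh1 hball hdist
end
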